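/- For g ∈ {α,β,γ} and A ⊆ [n], the normalized volume of C_{3,n} ∩ {x : S_{A,g}(x) ≤ 1−|A|} in ℤ^{3n} equals ∑_{i=0}^n (−2)^i C(n,i) (3n)!/(2n+i)!. -/

import Mathlib

/-!
For a point `y` of the solid simplex `{y ≥ 0, y₀ + y₁ + y₂ ≤ 1}`, the pair sum
`s = y_{g+1} + y_{g+2}` has density `t (1 - t)` on `[0, 1]` (the fibre over `s` is a segment of
length `s` times an interval of length `1 - s`). The density is symmetric under `t ↦ 1 - t`, so
`1 - s` has the same law, and the set in question is `{∑ᵢ fᵢ(xᵢ) ≤ 1}` with every `fᵢ` equal to `s`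
or `1 - s`, where `xᵢ` is the `i`-th row. By Fubini over the rows, the volume `Vₙ(c)` of
`{∑ᵢ fᵢ(xᵢ) ≤ c}` satisfies `Vₙ₊₁(c) = ∫₀¹ t (1 - t) Vₙ(c - t) dt` for `c ≤ 1`, with
`V₀ = 1_{c ≥ 0}`. Convolving `t (1 - t)` with `t^m / m!` gives
`c^(m+2)/(m+2)! - 2 c^(m+3)/(m+3)!`, so Pascal's rule yields
`Vₙ(c) = ∑ₖ (-2)^k C(n,k) c^(2n+k) / (2n+k)!` for `0 ≤ c ≤ 1`.
-/

open MeasureTheory Set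
open scoped Nat ENNReal

lemma integral_mul_one_sub_mul_pow_div_factorial (m : ℕ) (c : ℝ) :
    ∫ t in (0 : ℝ)..c, t * (1 - t) * ((c - t) ^ m / m !) =
      c ^ (m + 2) / (m + 2)! - 2 * (c ^ (m + 3) / (m + 3)!) := by
  let f : ℝ → ℝ := fun u =>
    c * (1 - c) / m ! * u ^ m + (2 * c - 1) / m ! * u ^ (m + 1) - 1 / m ! * u ^ (m + 2)
  calc ∫ t in (0 : ℝ)..c, t * (1 - t) * ((c - t) ^ m / m !)
      = ∫ t in (0 : ℝ)..c, f (c - t) :=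
        intervalIntegral.integral_congr fun t _ => by simp only [f]; ring
    _ = ∫ u in (0 : ℝ)..c, f u := by
        rw [intervalIntegral.integral_comp_sub_left]; simp only [sub_self, sub_zero]
    _ = _ := by
      have hint : ∀ k, IntervalIntegrable (fun u : ℝ => u ^ k) volume 0 c :=
        fun k => (continuous_pow k).intervalIntegrable _ _
      simp only [f]
      rw [intervalIntegral.integral_sub (((hint _).const_mul _).add ((hint _).const_mul _))
          ((hint _).const_mul _),
        intervalIntegral.integral_add ((hint _).const_mul _) ((hint _).const_mul _)]
      simp only [intervalIntegral.integral_const_mul, integral_pow]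
      push_cast [Nat.factorial_succ]
      field_simp
      ring

lemma ofReal_intervalIntegral_eq_setLIntegral {f : ℝ → ℝ} {a b : ℝ} (hab : a ≤ b)
    (hf : IntervalIntegrable f volume a b) (hnn : ∀ x ∈ Ioc a b, 0 ≤ f x) :
    ENNReal.ofReal (∫ x in a..b, f x) = ∫⁻ x in Ioc a b, ENNReal.ofReal (f x) := by
  rw [intervalIntegral.integral_of_le hab,
    ofReal_integral_eq_lintegral_ofReal ((intervalIntegrable_iff_integrableOn_Ioc_of_le hab).1 hf)
      ((ae_restrict_iff' measurableSet_Ioc).2 (Filter.Eventually.of_forall hnn))]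

lemma lintegral_quadrant_comp_add {H : ℝ → ℝ≥0∞} (hH : Measurable H) :
    ∫⁻ p in Ici (0 : ℝ) ×ˢ Ici 0, H (p.1 + p.2) = ∫⁻ t, ENNReal.ofReal t * H t := by
  set K : ℝ × ℝ → ℝ≥0∞ := {q | 0 ≤ q.1 ∧ q.1 ≤ q.2}.indicator fun q => H q.2
  have hK : Measurable K := (hH.comp measurable_snd).indicator
    ((measurableSet_le measurable_const measurable_fst).inter
      (measurableSet_le measurable_fst measurable_snd))
  have hshear (p : ℝ × ℝ) :
      (Ici 0 ×ˢ Ici 0).indicator (fun p => H (p.1 + p.2)) p = K (p.1, p.1 + p.2) := by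
    simp only [K, indicator, mem_prod, mem_Ici, mem_ofPred_eq, le_add_iff_nonneg_right]
  rw [← lintegral_indicator (measurableSet_Ici.prod measurableSet_Ici), lintegral_congr hshear,
    Measure.volume_eq_prod, (measurePreserving_prod_add volume volume).lintegral_comp hK,
    lintegral_prod_symm _ hK.aemeasurable]
  refine lintegral_congr fun t => ?_
  have : ∀ a, K (a, t) = (Icc 0 t).indicator (fun _ => H t) a := fun a => rfl
  rw [lintegral_congr this, lintegral_indicator measurableSet_Icc, setLIntegral_const,
    Real.volume_Icc, sub_zero, mul_comm]

lemma sum_ite_mem_one_sub {ι : Type*} [Fintype ι] [DecidableEq ι] (A : Finset ι) (s : ι → ℝ) :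
    ∑ i, (if i ∈ A then 1 - s i else s i) = A.card - ∑ i ∈ A, s i + ∑ i ∈ Aᶜ, s i := by
  rw [← Finset.sum_add_sum_compl A, Finset.sum_congr rfl fun i hi => if_pos hi,
    Finset.sum_congr rfl fun i hi => if_neg (Finset.mem_compl.1 hi), Finset.sum_sub_distrib]
  simp

def finSuccProdEquiv (n : ℕ) (κ : Type*) : κ ⊕ (Fin n × κ) ≃ Fin (n + 1) × κ where
  toFun := Sum.elim (fun j => (0, j)) fun p => (p.1.succ, p.2)
  invFun p := Fin.cases (Sum.inl p.2) (fun i => Sum.inr (i, p.2)) p.1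
  left_inv := by rintro (j | ⟨i, j⟩) <;> simp
  right_inv := by
    rintro ⟨i, j⟩
    induction i using Fin.cases <;> simp

noncomputable def volumePoly (n : ℕ) (c : ℝ) : ℝ :=
  ∑ k ∈ Finset.range (n + 1), (-2 : ℝ) ^ k * n.choose k * (c ^ (2 * n + k) / (2 * n + k)!)

lemma volumePoly_zero (c : ℝ) : volumePoly 0 c = 1 := by
  simp [volumePoly]

lemma volumePoly_succ (n : ℕ) (c : ℝ) :
    volumePoly (n + 1) c = ∫ t in (0 : ℝ)..c, t * (1 - t) * volumePoly n (c - t) := by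
  simp only [volumePoly, Finset.mul_sum]
  rw [intervalIntegral.integral_finsetSum fun k _ =>
    (by fun_prop : Continuous _).intervalIntegrable _ _]
  simp_rw [mul_left_comm _ ((-2 : ℝ) ^ _ * _), intervalIntegral.integral_const_mul,
    integral_mul_one_sub_mul_pow_div_factorial]
  convert Finset.sum_choose_succ_mul
    (fun i _ => (-2 : ℝ) ^ i * (c ^ (2 * n + 2 + i) / (2 * n + 2 + i)!)) n using 1
  · refine Finset.sum_congr rfl fun k _ => ?_
    rw [show 2 * (n + 1) + k = 2 * n + 2 + k by ring]
    ring
  · rw [← Finset.sum_add_distrib]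
    refine Finset.sum_congr rfl fun k _ => ?_
    rw [show 2 * n + 2 + (k + 1) = 2 * n + k + 3 by ring,
      show 2 * n + 2 + k = 2 * n + k + 2 by ring]
    ring

@[fun_prop]
lemma continuous_volumePoly (n : ℕ) : Continuous (volumePoly n) := by
  unfold volumePoly
  fun_prop

lemma volumePoly_nonneg (n : ℕ) {c : ℝ} (hc0 : 0 ≤ c) (hc1 : c ≤ 1) : 0 ≤ volumePoly n c := by
  induction n generalizing c with
  | zero => simp [volumePoly_zero]
  | succ n ih =>
    rw [volumePoly_succ]
    refine intervalIntegral.integral_nonneg hc0 fun t ht => ?_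
    have := ih (sub_nonneg.2 ht.2) (by linarith [ht.1])
    have : 0 ≤ 1 - t := by linarith [ht.2]
    have := ht.1
    positivity

def simplex3 : Set (Fin 3 → ℝ) := {y | (∀ j, 0 ≤ y j) ∧ ∑ j, y j ≤ 1}

lemma add_add_eq_sum_succAbove (g : Fin 3) (y : Fin 3 → ℝ) :
    y (g + 1) + y (g + 2) = ∑ j : Fin 2, y (g.succAbove j) := by
  fin_cases g <;> simp [Fin.sum_univ_two, Fin.succAbove, Fin.lt_def, add_comm]

lemma insertNth_mem_simplex3 (g : Fin 3) (u : ℝ) (q : Fin 2 → ℝ) :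
    g.insertNth u q ∈ simplex3 ↔ (∀ j, 0 ≤ q j) ∧ u ∈ Icc 0 (1 - ∑ j, q j) := by
  simp only [simplex3, mem_ofPred_eq, Fin.forall_iff_succAbove g, Fin.sum_univ_succAbove _ g,
    Fin.insertNth_apply_same, Fin.insertNth_apply_succAbove, mem_Icc, le_sub_iff_add_le]
  tauto

lemma measurableSet_simplex3 : MeasurableSet simplex3 := by
  simp only [simplex3, ofPred_and, ofPred_forall]
  exact (MeasurableSet.iInter fun j => measurableSet_le measurable_const (by fun_prop)).inter
    (measurableSet_le (by fun_prop) measurable_const)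

lemma pairSum_mem_Icc (g : Fin 3) {y : Fin 3 → ℝ} (hy : y ∈ simplex3) :
    y (g + 1) + y (g + 2) ∈ Icc 0 1 := by
  obtain ⟨hnn, hsum⟩ := hy
  rw [Fin.sum_univ_succAbove _ g] at hsum
  rw [add_add_eq_sum_succAbove]
  exact ⟨Finset.sum_nonneg fun j _ => hnn _, by linarith [hnn g]⟩

/-- `ENNReal.ofReal` truncates the density `t (1 - t)` to zero outside `[0, 1]`. -/
noncomputable def pairSumMeasure : Measure ℝ :=
  volume.withDensity fun t => ENNReal.ofReal t * ENNReal.ofReal (1 - t)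

lemma lintegral_insertNth_simplex3 (g : Fin 3) (F : ℝ → ℝ≥0∞) (q : Fin 2 → ℝ) :
    ∫⁻ u, simplex3.indicator (fun y => F (y (g + 1) + y (g + 2))) (g.insertNth u q) =
      (Ici 0 ×ˢ Ici 0).indicator (fun p => ENNReal.ofReal (1 - (p.1 + p.2)) * F (p.1 + p.2))
        (MeasurableEquiv.finTwoArrow q) := by
  have hq : MeasurableEquiv.finTwoArrow q ∈ Ici (0 : ℝ) ×ˢ Ici 0 ↔ ∀ j, 0 ≤ q j := by
    simp [Fin.forall_fin_two]
  by_cases hq0 : ∀ j, 0 ≤ q j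
  · have (u : ℝ) : simplex3.indicator (fun y => F (y (g + 1) + y (g + 2))) (g.insertNth u q) =
        (Icc 0 (1 - ∑ j, q j)).indicator (fun _ => F (∑ j, q j)) u := by
      simp only [indicator, insertNth_mem_simplex3, add_add_eq_sum_succAbove,
        Fin.insertNth_apply_succAbove, hq0, implies_true, true_and]
    rw [lintegral_congr this, lintegral_indicator measurableSet_Icc, setLIntegral_const,
      Real.volume_Icc, indicator_of_mem (hq.2 hq0)]
    simp [Fin.sum_univ_two, mul_comm]
  · have (u : ℝ) : simplex3.indicator (fun y => F (y (g + 1) + y (g + 2))) (g.insertNth u q) = 0 :=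
      indicator_of_notMem (fun h => hq0 ((insertNth_mem_simplex3 g u q).1 h).1) _
    rw [lintegral_congr this, lintegral_zero, indicator_of_notMem (mt hq.1 hq0)]

lemma lintegral_simplex3_comp_pairSum (g : Fin 3) {F : ℝ → ℝ≥0∞} (hF : Measurable F) :
    ∫⁻ y in simplex3, F (y (g + 1) + y (g + 2)) =
      ∫⁻ t, ENNReal.ofReal t * (ENNReal.ofReal (1 - t) * F t) := by
  have hG : Measurable (simplex3.indicator fun y => F (y (g + 1) + y (g + 2))) :=
    (hF.comp (by fun_prop)).indicator measurableSet_simplex3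
  rw [← lintegral_indicator measurableSet_simplex3,
    ← ((volume_preserving_piFinSuccAbove (fun _ : Fin 3 => ℝ) g).symm _).lintegral_comp hG,
    Measure.volume_eq_prod, lintegral_prod_symm]
  · refine (lintegral_congr (lintegral_insertNth_simplex3 g F)).trans ?_
    rw [(volume_preserving_finTwoArrow ℝ).lintegral_comp
        ((by fun_prop : Measurable _).indicator (measurableSet_Ici.prod measurableSet_Ici)),
      lintegral_indicator (measurableSet_Ici.prod measurableSet_Ici)]
    exact lintegral_quadrant_comp_add (H := fun t => ENNReal.ofReal (1 - t) * F t) (by fun_prop)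
  · exact (hG.comp (MeasurableEquiv.measurable _)).aemeasurable

lemma map_pairSum_simplex3 (g : Fin 3) :
    (volume.restrict simplex3).map (fun y => y (g + 1) + y (g + 2)) = pairSumMeasure :=
  Measure.ext_of_lintegral _ fun F hF => by
    rw [lintegral_map hF (by fun_prop), lintegral_simplex3_comp_pairSum g hF, pairSumMeasure,
      lintegral_withDensity_eq_lintegral_mul _ (by fun_prop) hF]
    simp only [Pi.mul_apply, mul_assoc]

lemma map_one_sub_pairSumMeasure : pairSumMeasure.map (fun t => 1 - t) = pairSumMeasure :=
  Measure.ext_of_lintegral _ fun F hF => by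
    rw [lintegral_map hF (by fun_prop), pairSumMeasure,
      lintegral_withDensity_eq_lintegral_mul _ (by fun_prop) (by fun_prop),
      lintegral_withDensity_eq_lintegral_mul _ (by fun_prop) hF, ← lintegral_sub_left_eq_self _ 1]
    refine lintegral_congr fun t => ?_
    simp only [Pi.mul_apply, sub_sub_cancel]
    ring

lemma map_one_sub_pairSum_simplex3 (g : Fin 3) :
    (volume.restrict simplex3).map (fun y => 1 - (y (g + 1) + y (g + 2))) = pairSumMeasure := by
  rw [← map_one_sub_pairSumMeasure, ← map_pairSum_simplex3 g,
    Measure.map_map (by fun_prop) (by fun_prop)]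
  rfl

noncomputable def levelVolume (n : ℕ) : ℝ → ℝ := (Ici 0).indicator (volumePoly n)

lemma levelVolume_nonneg (n : ℕ) {c : ℝ} (hc : c ≤ 1) : 0 ≤ levelVolume n c := by
  by_cases hc0 : 0 ≤ c
  · exact (indicator_of_mem hc0 _).trans_ge (volumePoly_nonneg n hc0 hc)
  · exact (indicator_of_notMem hc0 _).ge

@[fun_prop]
lemma measurable_levelVolume (n : ℕ) : Measurable (levelVolume n) :=
  (continuous_volumePoly n).measurable.indicator measurableSet_Ici

lemma lintegral_levelVolume_pairSumMeasure (n : ℕ) {c : ℝ} (hc : c ≤ 1) :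
    ∫⁻ t, ENNReal.ofReal (levelVolume n (c - t)) ∂pairSumMeasure =
      ENNReal.ofReal (levelVolume (n + 1) c) := by
  rw [pairSumMeasure, lintegral_withDensity_eq_lintegral_mul _ (by fun_prop) (by fun_prop)]
  simp only [Pi.mul_apply]
  have hpt : ∀ t, ENNReal.ofReal t * ENNReal.ofReal (1 - t) * ENNReal.ofReal (levelVolume n (c - t))
      = (Ioc 0 c).indicator (fun t => ENNReal.ofReal (t * (1 - t) * volumePoly n (c - t))) t := by
    intro t
    rcases le_or_gt t 0 with ht0 | ht0
    · rw [ENNReal.ofReal_of_nonpos ht0, indicator_of_notMem fun h => h.1.not_ge ht0, zero_mul,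
        zero_mul]
    rcases le_or_gt t c with htc | htc
    · have hct : c - t ∈ Ici 0 := sub_nonneg.2 htc
      rw [indicator_of_mem (show t ∈ Ioc 0 c from ⟨ht0, htc⟩), levelVolume, indicator_of_mem hct,
        ENNReal.ofReal_mul (by nlinarith), ENNReal.ofReal_mul ht0.le]
    · have hct : c - t ∉ Ici 0 := by simpa using htc
      rw [indicator_of_notMem fun h => h.2.not_gt htc, levelVolume, indicator_of_notMem hct,
        ENNReal.ofReal_zero, mul_zero]
  rw [lintegral_congr hpt, lintegral_indicator measurableSet_Ioc]
  by_cases hc0 : 0 ≤ c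
  · rw [levelVolume, indicator_of_mem (show c ∈ Ici 0 from hc0), volumePoly_succ,
      ofReal_intervalIntegral_eq_setLIntegral hc0
        ((by fun_prop : Continuous _).intervalIntegrable _ _)]
    rintro t ⟨ht0, htc⟩
    have := volumePoly_nonneg n (sub_nonneg.2 htc) (by linarith)
    have : 0 ≤ 1 - t := by linarith
    positivity
  · rw [Ioc_eq_empty_of_le (not_le.1 hc0).le, Measure.restrict_empty, lintegral_zero_measure,
      levelVolume, indicator_of_notMem (show c ∉ Ici 0 from hc0), ENNReal.ofReal_zero]

def levelSet {n : ℕ} (f : Fin n → (Fin 3 → ℝ) → ℝ) (c : ℝ) : Set (Fin n × Fin 3 → ℝ) :=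
  {x | (∀ i, Function.curry x i ∈ simplex3) ∧ ∑ i, f i (Function.curry x i) ≤ c}

lemma measurableSet_levelSet {n : ℕ} {f : Fin n → (Fin 3 → ℝ) → ℝ} (hf : ∀ i, Measurable (f i))
    (c : ℝ) : MeasurableSet (levelSet f c) := by
  have hrow : ∀ i, Measurable fun x : Fin n × Fin 3 → ℝ => Function.curry x i := fun i =>
    measurable_pi_lambda _ fun j => measurable_pi_apply (i, j)
  simp only [levelSet, ofPred_and, ofPred_forall]
  exact (MeasurableSet.iInter fun i => measurableSet_simplex3.preimage (hrow i)).inter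
    (measurableSet_le (Finset.measurable_sum _ fun i _ => (hf i).comp (hrow i)) measurable_const)

noncomputable def consRowEquiv (n : ℕ) :
    (Fin (n + 1) × Fin 3 → ℝ) ≃ᵐ (Fin 3 → ℝ) × (Fin n × Fin 3 → ℝ) :=
  (MeasurableEquiv.piCongrLeft (fun _ => ℝ) (finSuccProdEquiv n (Fin 3))).symm.trans
    (MeasurableEquiv.sumPiEquivProdPi fun _ => ℝ)

lemma consRowEquiv_apply (n : ℕ) (x : Fin (n + 1) × Fin 3 → ℝ) :
    consRowEquiv n x = (Function.curry x 0, fun p => x (p.1.succ, p.2)) := rfl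

lemma measurePreserving_consRowEquiv (n : ℕ) :
    MeasurePreserving (consRowEquiv n) volume volume :=
  (volume_measurePreserving_sumPiEquivProdPi _).comp
    ((volume_measurePreserving_piCongrLeft _ _).symm _)

lemma levelSet_succ {n : ℕ} (f : Fin (n + 1) → (Fin 3 → ℝ) → ℝ) (c : ℝ) :
    levelSet f c = consRowEquiv n ⁻¹'
      {p | p.1 ∈ simplex3 ∧ p.2 ∈ levelSet (fun i => f i.succ) (c - f 0 p.1)} := by
  ext x
  simp only [levelSet, mem_ofPred_eq, mem_preimage, consRowEquiv_apply, Fin.forall_fin_succ,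
    Fin.sum_univ_succ]
  constructor
  · rintro ⟨⟨h0, hrows⟩, hsum⟩
    exact ⟨h0, hrows, le_sub_iff_add_le'.2 hsum⟩
  · rintro ⟨h0, hrows, hsum⟩
    exact ⟨⟨h0, hrows⟩, le_sub_iff_add_le'.1 hsum⟩

lemma volume_levelSet_zero (f : Fin 0 → (Fin 3 → ℝ) → ℝ) (c : ℝ) :
    volume (levelSet f c) = ENNReal.ofReal (levelVolume 0 c) := by
  by_cases hc0 : 0 ≤ c
  · have : levelSet f c = univ := by ext x; simp [levelSet, hc0]
    rw [this, levelVolume, indicator_of_mem (show c ∈ Ici 0 from hc0), volumePoly_zero,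
      ENNReal.ofReal_one]
    simp [volume_pi]
  · have : levelSet f c = ∅ := by ext x; simp [levelSet, hc0]
    rw [this, measure_empty, levelVolume, indicator_of_notMem (show c ∉ Ici 0 from hc0),
      ENNReal.ofReal_zero]

theorem volume_levelSet {n : ℕ} (f : Fin n → (Fin 3 → ℝ) → ℝ) (hf : ∀ i, Measurable (f i))
    (hf0 : ∀ i, ∀ y ∈ simplex3, 0 ≤ f i y)
    (hlaw : ∀ i, (volume.restrict simplex3).map (f i) = pairSumMeasure) {c : ℝ} (hc : c ≤ 1) :
    volume (levelSet f c) = ENNReal.ofReal (levelVolume n c) := by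
  induction n generalizing c with
  | zero => exact volume_levelSet_zero f c
  | succ n ih =>
    set T : Set ((Fin 3 → ℝ) × (Fin n × Fin 3 → ℝ)) :=
      {p | p.1 ∈ simplex3 ∧ p.2 ∈ levelSet (fun i => f i.succ) (c - f 0 p.1)}
    have hT : MeasurableSet T := by
      have := (measurableSet_levelSet hf c).preimage (consRowEquiv n).symm.measurable
      rwa [levelSet_succ, ← preimage_comp, MeasurableEquiv.self_comp_symm, preimage_id] at this
    have hslice (y : Fin 3 → ℝ) : volume (Prod.mk y ⁻¹' T) =
        simplex3.indicator (fun y => ENNReal.ofReal (levelVolume n (c - f 0 y))) y := by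
      by_cases hy : y ∈ simplex3
      · rw [indicator_of_mem hy, ← ih _ (fun i => hf i.succ) (fun i => hf0 i.succ)
          (fun i => hlaw i.succ) (by linarith [hf0 0 y hy])]
        simp only [T, hy, true_and, preimage_ofPred_eq]
        rfl
      · rw [indicator_of_notMem hy]
        simp [T, hy]
    rw [levelSet_succ, (measurePreserving_consRowEquiv n).measure_preimage_equiv,
      Measure.volume_eq_prod, Measure.prod_apply hT, lintegral_congr hslice,
      lintegral_indicator measurableSet_simplex3,
      ← lintegral_map (f := fun t => ENNReal.ofReal (levelVolume n (c - t))) (by fun_prop) (hf 0),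
      hlaw 0, lintegral_levelVolume_pairSumMeasure n hc]

theorem stmt14 (n : ℕ) (g : Fin 3) (A : Finset (Fin n)) :
    ((3 * n).factorial : ℝ) *
        (volume {x : Fin n × Fin 3 → ℝ |
          (∀ p, 0 ≤ x p) ∧ (∀ i, x (i, 0) + x (i, 1) + x (i, 2) ≤ 1) ∧
          ∑ i ∈ Aᶜ, (x (i, g + 1) + x (i, g + 2))
              - ∑ i ∈ A, (x (i, g + 1) + x (i, g + 2))
            ≤ 1 - (A.card : ℝ)}).toReal
      = ∑ i ∈ Finset.range (n + 1),
          (-2 : ℝ) ^ i * (n.choose i : ℝ) *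
            (((3 * n).factorial : ℝ) / ((2 * n + i).factorial : ℝ)) := by
  set f : Fin n → (Fin 3 → ℝ) → ℝ := fun i =>
    if i ∈ A then fun y => 1 - (y (g + 1) + y (g + 2)) else fun y => y (g + 1) + y (g + 2)
  have hset : {x : Fin n × Fin 3 → ℝ |
      (∀ p, 0 ≤ x p) ∧ (∀ i, x (i, 0) + x (i, 1) + x (i, 2) ≤ 1) ∧
      ∑ i ∈ Aᶜ, (x (i, g + 1) + x (i, g + 2)) - ∑ i ∈ A, (x (i, g + 1) + x (i, g + 2))
        ≤ 1 - (A.card : ℝ)} = levelSet f 1 := by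
    ext x
    simp only [levelSet, simplex3, f, ite_apply, mem_ofPred_eq, sum_ite_mem_one_sub,
      Fin.sum_univ_three, Function.curry_apply, Prod.forall, forall_and, and_assoc]
    exact and_congr_right' (and_congr_right' (by constructor <;> intro h <;> linarith))
  have hf (i : Fin n) : Measurable (f i) := by
    simp only [f]
    split_ifs <;> fun_prop
  have hf0 (i : Fin n) (y : Fin 3 → ℝ) (hy : y ∈ simplex3) : 0 ≤ f i y := by
    have := pairSum_mem_Icc g hy
    simp only [f]
    split_ifs <;> linarith [this.1, this.2]
  have hlaw (i : Fin n) : (volume.restrict simplex3).map (f i) = pairSumMeasure := by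
    simp only [f]
    split_ifs
    exacts [map_one_sub_pairSum_simplex3 g, map_pairSum_simplex3 g]
  rw [hset, volume_levelSet f hf hf0 hlaw le_rfl,
    ENNReal.toReal_ofReal (levelVolume_nonneg n le_rfl), levelVolume,
    indicator_of_mem (mem_Ici.2 zero_le_one), volumePoly, Finset.mul_sum]
  refine Finset.sum_congr rfl fun k _ => ?_
  rw [one_pow]
  ring
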